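/- The pair (λ, μ) with λ the rectangle with r−1 rows of length r and μ the rectangle with r rows of length r−1 is an irreducible element of the Kostka semigroup of rank r: any decomposition (λ,μ) = (λ¹,μ¹)+(λ²,μ²) into elements of the semigroup has one summand equal to zero. -/

import Mathlib

/-!
Two antitone functions whose sum is a rectangle of height `n` are themselves rectangles of
height `n`, since their sum is constant below `n`. So a summand of the given pair is
`((r - 1) × a, r × b)` with `(r - 1) * a = r * b` and `a ≤ r`; as `r` and `r - 1` are coprime,
`r ∣ a`, hence the summand is `0` or the whole pair.
-/

/-- `(lam, mu)` is an element of the Kostka semigroup of rank `r`: both are partitions with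
at most `r` parts (antitone, vanishing from index `r`), of equal size, with `lam`
dominating `mu`. -/
def KostkaElt (r : ℕ) (lam mu : ℕ → ℕ) : Prop :=
  Antitone lam ∧ Antitone mu ∧ (∀ i, r ≤ i → lam i = 0) ∧ (∀ i, r ≤ i → mu i = 0) ∧
  (∑ i ∈ Finset.range r, lam i = ∑ i ∈ Finset.range r, mu i) ∧
  (∀ t, t ≤ r → ∑ i ∈ Finset.range t, mu i ≤ ∑ i ∈ Finset.range t, lam i)

/-- `(lam, mu)` admits a nontrivial decomposition in the Kostka semigroup of rank `r`. -/
def KostkaReducible (r : ℕ) (lam mu : ℕ → ℕ) : Prop :=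
  ∃ l1 m1 l2 m2 : ℕ → ℕ, KostkaElt r l1 m1 ∧ KostkaElt r l2 m2 ∧
    (∀ i, lam i = l1 i + l2 i) ∧ (∀ i, mu i = m1 i + m2 i) ∧
    (∃ i, l1 i ≠ 0 ∨ m1 i ≠ 0) ∧ (∃ i, l2 i ≠ 0 ∨ m2 i ≠ 0)

open Finset

theorem Antitone.eq_ite_of_add_eq_ite {f g : ℕ → ℕ} (hf : Antitone f) (hg : Antitone g)
    {n c : ℕ} (h : ∀ i, (if i < n then c else 0) = f i + g i) :
    ∀ i, f i = if i < n then f 0 else 0 := by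
  intro i
  have hi := h i
  split_ifs at hi ⊢ with hin
  · have h0 := h 0
    rw [if_pos (Nat.zero_lt_of_lt hin)] at h0
    have := hf (Nat.zero_le i)
    have := hg (Nat.zero_le i)
    omega
  · omega

theorem sum_range_ite_lt {m n c : ℕ} (h : n ≤ m) :
    ∑ i ∈ range m, (if i < n then c else 0) = n * c := by
  obtain ⟨k, rfl⟩ := Nat.exists_eq_add_of_le h
  simp +contextual [sum_range_add, sum_ite_of_true]

theorem eq_zero_or_eq_of_pred_mul_eq_mul {r a b : ℕ} (h : (r - 1) * a = r * b) (ha : a ≤ r)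
    (hb : b ≤ r - 1) : (a = 0 ∧ b = 0) ∨ (a = r ∧ b = r - 1) := by
  rcases Nat.eq_zero_or_pos r with rfl | hr
  · omega
  obtain ⟨k, rfl⟩ : r ∣ a :=
    ((Nat.coprime_self_sub_right hr).2 (Nat.coprime_one_right r)).dvd_of_dvd_mul_left
      ⟨b, h⟩
  obtain rfl | rfl : k = 0 ∨ k = 1 := by
    rcases Nat.lt_or_ge k 2 with hk | hk
    · omega
    · nlinarith
  · exact .inl ⟨mul_zero r, by simpa [hr.ne'] using h.symm⟩
  · right
    refine ⟨mul_one r, Nat.eq_of_mul_eq_mul_left hr ?_⟩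
    rw [← h, mul_one, mul_comm]

theorem stmt17_general (r : ℕ) :
    ∀ l1 m1 l2 m2 : ℕ → ℕ, KostkaElt r l1 m1 → KostkaElt r l2 m2 →
      (∀ i, (if i < r - 1 then r else 0) = l1 i + l2 i) →
      (∀ i, (if i < r then r - 1 else 0) = m1 i + m2 i) →
      ((∀ i, l1 i = 0 ∧ m1 i = 0) ∨ (∀ i, l2 i = 0 ∧ m2 i = 0)) := by
  rintro l1 m1 l2 m2 ⟨hl1, hm1, -, -, hsize, -⟩ ⟨hl2, hm2, -⟩ hl hm
  have hl1_eq := hl1.eq_ite_of_add_eq_ite hl2 hl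
  have hm1_eq := hm1.eq_ite_of_add_eq_ite hm2 hm
  have hsize' : (r - 1) * l1 0 = r * m1 0 := by
    rwa [sum_congr rfl fun i _ ↦ hl1_eq i, sum_congr rfl fun i _ ↦ hm1_eq i,
      sum_range_ite_lt (Nat.sub_le r 1), sum_range_ite_lt le_rfl] at hsize
  have ha : l1 0 ≤ r := by have := hl 0; split_ifs at this <;> omega
  have hb : m1 0 ≤ r - 1 := by have := hm 0; split_ifs at this <;> omega
  rcases eq_zero_or_eq_of_pred_mul_eq_mul hsize' ha hb with ⟨ha0, hb0⟩ | ⟨har, hbr⟩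
  · left
    intro i
    rw [hl1_eq i, hm1_eq i, ha0, hb0]
    simp
  · right
    intro i
    have hli := hl i
    have hmi := hm i
    rw [hl1_eq i, har] at hli
    rw [hm1_eq i, hbr] at hmi
    omega

/-- the pair consisting of the rectangle with `r - 1` rows of length `r`
and the rectangle with `r` rows of length `r - 1` is irreducible in the Kostka semigroup
of rank `r`: in any decomposition into two semigroup elements, one summand is zero. -/
theorem stmt17 (r : ℕ) (hr : 2 ≤ r) :
    ∀ l1 m1 l2 m2 : ℕ → ℕ, KostkaElt r l1 m1 → KostkaElt r l2 m2 →
      (∀ i, (if i < r - 1 then r else 0) = l1 i + l2 i) →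
      (∀ i, (if i < r then r - 1 else 0) = m1 i + m2 i) →
      ((∀ i, l1 i = 0 ∧ m1 i = 0) ∨ (∀ i, l2 i = 0 ∧ m2 i = 0)) :=
  stmt17_general r
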